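/- arXiv:2501.15220 — 4 statements merged into one kernel-verified Lean document; each statement's English description precedes it below -/
import Mathlib

section
/- Let p > 1, let h : [0,∞) → ℝ be continuous with h(s) > 0 for s > 0, and assume lim_{t→∞} t^{-(p+1)/2} ∫_0^t s^{p+1} h(s) ds = ∞. Define for c > 0 the energy E(c) = inf over nonzero w ∈ H¹₀(0,c) of (∫_0^c |w'|² ds) / (∫_0^c h(s)|w|^{p+1} ds)^{2/(p+1)}. Then E(c) → 0 as c → ∞. -/
/-!
Test the energy with the parabola `w(s) = s (c - s)`. Its Dirichlet integral is `c³/3`, and on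
`[0, c/2]` we have `|w(s)| ≥ s c/2`, so the weighted integral is at least `(c/2)^(p+1) F(c/2)` with
`F(t) = ∫₀ᵗ s^(p+1) h`. As `(a^(p+1) F)^(2/(p+1)) = a³ (a^(-(p+1)/2) F)^(2/(p+1))`, this gives
`E(c) ≤ (8/3) A(c/2)^(-2/(p+1))` with `A(t) = t^(-(p+1)/2) F(t)`, and `A → ∞` by hypothesis.
-/

open Real Filter Set MeasureTheory intervalIntegral Topology

lemma nonneg_of_continuousOn_Ici_of_pos {f : ℝ → ℝ} {a : ℝ} (hf : ContinuousOn f (Ici a))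
    (hpos : ∀ s, a < s → 0 < f s) {s : ℝ} (hs : a ≤ s) : 0 ≤ f s := by
  rcases hs.eq_or_lt with rfl | hs
  · have hlim : Tendsto f (𝓝[>] a) (𝓝 (f a)) :=
      (hf a self_mem_Ici).tendsto.mono_left (nhdsWithin_mono _ Ioi_subset_Ici_self)
    exact ge_of_tendsto hlim (eventually_nhdsWithin_of_forall fun u hu => (hpos u hu).le)
  · exact (hpos s hs).le

noncomputable def rayleighQuotient (p : ℝ) (h w : ℝ → ℝ) (c : ℝ) : ℝ :=
  (∫ s in (0:ℝ)..c, deriv w s ^ 2) / (∫ s in (0:ℝ)..c, h s * |w s| ^ (p + 1)) ^ (2 / (p + 1))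

def rayleighValues (p : ℝ) (h : ℝ → ℝ) (c : ℝ) : Set ℝ :=
  { R | ∃ w : ℝ → ℝ, ContDiff ℝ 1 w ∧ w 0 = 0 ∧ w c = 0 ∧ (∃ s ∈ Ioo 0 c, w s ≠ 0) ∧
    R = rayleighQuotient p h w c }

lemma rayleighQuotient_nonneg {p c : ℝ} {h : ℝ → ℝ} (hc : 0 ≤ c) (h0 : ∀ s, 0 ≤ s → 0 ≤ h s)
    (w : ℝ → ℝ) : 0 ≤ rayleighQuotient p h w c :=
  div_nonneg (integral_nonneg hc fun _ _ => sq_nonneg _) <| rpow_nonneg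
    (integral_nonneg hc fun s hs => mul_nonneg (h0 s hs.1) (rpow_nonneg (abs_nonneg _) _)) _

lemma sInf_rayleighValues_le {p c : ℝ} {h w : ℝ → ℝ} (hc : 0 ≤ c)
    (h0 : ∀ s, 0 ≤ s → 0 ≤ h s) (hw : rayleighQuotient p h w c ∈ rayleighValues p h c) :
    0 ≤ sInf (rayleighValues p h c) ∧ sInf (rayleighValues p h c) ≤ rayleighQuotient p h w c := by
  have hnonneg : ∀ R ∈ rayleighValues p h c, 0 ≤ R := by
    rintro R ⟨w, -, -, -, -, rfl⟩
    exact rayleighQuotient_nonneg hc h0 w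
  exact ⟨le_csInf ⟨_, hw⟩ hnonneg, csInf_le ⟨0, hnonneg⟩ hw⟩

def parabola (c s : ℝ) : ℝ := s * (c - s)

lemma continuous_parabola (c : ℝ) : Continuous (parabola c) := by
  unfold parabola; fun_prop

lemma hasDerivAt_parabola (c s : ℝ) : HasDerivAt (parabola c) (c - 2 * s) s :=
  ((hasDerivAt_id' s).mul ((hasDerivAt_id' s).const_sub c)).congr_deriv (by ring)

lemma parabola_mem_rayleighValues {c : ℝ} (hc : 0 < c) (p : ℝ) (h : ℝ → ℝ) :
    rayleighQuotient p h (parabola c) c ∈ rayleighValues p h c := by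
  refine ⟨parabola c, ?_, by simp [parabola], by simp [parabola],
    ⟨c / 2, ⟨half_pos hc, half_lt_self hc⟩, ?_⟩, rfl⟩
  · exact contDiff_id.mul (contDiff_const.sub contDiff_id)
  · simp only [parabola]; nlinarith

lemma integral_deriv_parabola_sq (c : ℝ) :
    ∫ s in (0:ℝ)..c, deriv (parabola c) s ^ 2 = c ^ 3 / 3 := by
  have hderiv : deriv (parabola c) = fun s => c - 2 * s :=
    funext fun s => (hasDerivAt_parabola c s).deriv
  rw [hderiv, integral_comp_sub_mul (fun x => x ^ 2) two_ne_zero, integral_pow]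
  ring

lemma mul_integral_le_integral_parabola {p c : ℝ} {h : ℝ → ℝ} (hp : 0 ≤ p + 1)
    (hcont : ContinuousOn h (Ici 0)) (h0 : ∀ s, 0 ≤ s → 0 ≤ h s) (hc : 0 ≤ c) :
    (c / 2) ^ (p + 1) * ∫ s in (0:ℝ)..c / 2, s ^ (p + 1) * h s ≤
      ∫ s in (0:ℝ)..c, h s * |parabola c s| ^ (p + 1) := by
  have hint : ∀ a b, 0 ≤ a → a ≤ b →
      IntervalIntegrable (fun s => h s * |parabola c s| ^ (p + 1)) volume a b := by
    intro a b ha hab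
    refine ContinuousOn.intervalIntegrable_of_Icc hab (ContinuousOn.mul ?_ ?_)
    · exact hcont.mono fun x hx => le_trans ha hx.1
    · exact ((continuous_abs.comp (continuous_parabola c)).rpow_const
        fun _ => Or.inr hp).continuousOn
  have hc2 : 0 ≤ c / 2 := by positivity
  calc (c / 2) ^ (p + 1) * ∫ s in (0:ℝ)..c / 2, s ^ (p + 1) * h s
      = ∫ s in (0:ℝ)..c / 2, h s * (s * (c / 2)) ^ (p + 1) := by
        rw [← intervalIntegral.integral_const_mul]
        refine integral_congr fun s hs => ?_
        rw [uIcc_of_le hc2] at hs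
        simp only [mul_rpow hs.1 hc2]; ring
    _ ≤ ∫ s in (0:ℝ)..c / 2, h s * |parabola c s| ^ (p + 1) := by
        refine integral_mono_on hc2 ?_ (hint 0 _ le_rfl hc2) fun s hs => ?_
        · refine ContinuousOn.intervalIntegrable_of_Icc hc2 (ContinuousOn.mul ?_ ?_)
          · exact hcont.mono fun x hx => hx.1
          · exact (Continuous.continuousOn (by fun_prop)).rpow_const fun _ _ => Or.inr hp
        refine mul_le_mul_of_nonneg_left (rpow_le_rpow (by nlinarith [hs.1]) ?_ hp) (h0 s hs.1)
        rw [parabola, abs_of_nonneg (by nlinarith [hs.1, hs.2])]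
        nlinarith [hs.1, hs.2]
    _ ≤ ∫ s in (0:ℝ)..c, h s * |parabola c s| ^ (p + 1) := by
        rw [← integral_add_adjacent_intervals (hint 0 _ le_rfl hc2) (hint _ c hc2 (by linarith)),
          le_add_iff_nonneg_right]
        exact integral_nonneg (by linarith) fun s hs =>
          mul_nonneg (h0 s (hc2.trans hs.1)) (rpow_nonneg (abs_nonneg _) _)

lemma mul_rpow_two_div_eq_pow_three_mul {r a F : ℝ} (hr : 0 < r) (ha : 0 < a) (hF : 0 ≤ F) :
    (a ^ r * F) ^ (2 / r) = a ^ 3 * (a ^ (-r / 2) * F) ^ (2 / r) := by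
  rw [mul_rpow (rpow_nonneg ha.le _) hF, mul_rpow (rpow_nonneg ha.le _) hF, ← rpow_mul ha.le,
    ← rpow_mul ha.le, show r * (2 / r) = 2 by field_simp, show -r / 2 * (2 / r) = -1 by field_simp,
    rpow_two, rpow_neg_one]
  field_simp

lemma rayleighQuotient_parabola_le {p c : ℝ} {h : ℝ → ℝ} (hp : 0 < p + 1)
    (hcont : ContinuousOn h (Ici 0)) (h0 : ∀ s, 0 ≤ s → 0 ≤ h s) (hc : 0 < c)
    (hA : 0 < (c / 2) ^ (-(p + 1) / 2) * ∫ s in (0:ℝ)..c / 2, s ^ (p + 1) * h s) :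
    rayleighQuotient p h (parabola c) c ≤ 8 / 3 /
      ((c / 2) ^ (-(p + 1) / 2) * ∫ s in (0:ℝ)..c / 2, s ^ (p + 1) * h s) ^ (2 / (p + 1)) := by
  have hF : 0 < ∫ s in (0:ℝ)..c / 2, s ^ (p + 1) * h s :=
    pos_of_mul_pos_right hA (rpow_nonneg (by positivity) _)
  have hlower := mul_integral_le_integral_parabola hp.le hcont h0 hc.le
  calc rayleighQuotient p h (parabola c) c
      ≤ c ^ 3 / 3 /
          ((c / 2) ^ (p + 1) * ∫ s in (0:ℝ)..c / 2, s ^ (p + 1) * h s) ^ (2 / (p + 1)) := by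
        rw [rayleighQuotient, integral_deriv_parabola_sq]
        exact div_le_div_of_nonneg_left (by positivity) (by positivity)
          (rpow_le_rpow (by positivity) hlower (by positivity))
    _ = _ := by
        rw [mul_rpow_two_div_eq_pow_three_mul hp (by positivity) hF.le]
        field_simp
        ring

theorem stmt_1 (p : ℝ) (hp : 1 < p) (h : ℝ → ℝ)
    (hcont : ContinuousOn h (Set.Ici 0))
    (hpos : ∀ s : ℝ, 0 < s → 0 < h s)
    (hlim : Tendsto (fun t : ℝ => t ^ (-(p + 1) / 2) * ∫ s in (0:ℝ)..t, s ^ (p + 1) * h s)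
      atTop atTop)
    (E : ℝ → ℝ)
    (hE : ∀ c : ℝ, 0 < c → E c = sInf { R : ℝ | ∃ w : ℝ → ℝ, ContDiff ℝ 1 w ∧
      w 0 = 0 ∧ w c = 0 ∧ (∃ s ∈ Set.Ioo 0 c, w s ≠ 0) ∧
      R = (∫ s in (0:ℝ)..c, (deriv w s) ^ 2) /
          (∫ s in (0:ℝ)..c, h s * |w s| ^ (p + 1)) ^ (2 / (p + 1)) }) :
    Tendsto E atTop (nhds 0) := by
  have hp1 : 0 < p + 1 := by linarith
  have h0 : ∀ s, 0 ≤ s → 0 ≤ h s := fun _ => nonneg_of_continuousOn_Ici_of_pos hcont hpos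
  have hlim_half := hlim.comp (tendsto_id.atTop_div_const two_pos)
  have hbound : ∀ᶠ c in atTop, 0 ≤ E c ∧ E c ≤ 8 / 3 /
      ((c / 2) ^ (-(p + 1) / 2) * ∫ s in (0:ℝ)..c / 2, s ^ (p + 1) * h s) ^ (2 / (p + 1)) := by
    filter_upwards [eventually_gt_atTop 0, hlim_half.eventually_gt_atTop 0] with c hc hA
    have hEc : E c = sInf (rayleighValues p h c) := hE c hc
    obtain ⟨hE0, hEle⟩ := sInf_rayleighValues_le hc.le h0 (parabola_mem_rayleighValues hc p h)
    exact ⟨hEc ▸ hE0, hEc ▸ hEle.trans (rayleighQuotient_parabola_le hp1 hcont h0 hc hA)⟩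
  exact squeeze_zero' (hbound.mono fun _ => And.left) (hbound.mono fun _ => And.right)
    (tendsto_const_nhds.div_atTop ((tendsto_rpow_atTop (by positivity)).comp hlim_half))
end

section
/- Let p > 1, h continuous on [0,∞) with 0 ≤ h(s) ≤ M, and let w ∈ C²[0,c] satisfy w'' + h(s)w^p = 0 on (0,c), w(0) = w(c) = 0, w > 0 on (0,c). Then (w'(0))^{(p+3)/(p+1)} ≤ 2 M^{1/(p+1)} (∫_0^c |w'(s)|² ds)^{1/(p+1)} (∫_0^c h(s) w(s)^{p+1} ds)^{p/(p+1)}. -/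
/-!
Let `φ = w'`. Since `φ' = -h w^p ≤ 0`, `φ` is decreasing, and by Rolle it vanishes at some
`m ∈ (0, c)`, so `0 ≤ φ ≤ φ 0` on `[0, m]`. Integrating `(φ²)' = -2 φ h w^p` over `[0, m]` gives
`φ(0)² = 2 ∫₀^m φ h w^p`. Splitting `φ = φ^(2/(p+1)) φ^((p-1)/(p+1))` and bounding the second
factor by `φ(0)^((p-1)/(p+1))`, Hölder's inequality with exponents `p + 1` and `(p + 1)/p`, together
with `(h w^p)^((p+1)/p) ≤ M^(1/p) h w^(p+1)`, bounds `φ(0)²` by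
`2 φ(0)^((p-1)/(p+1)) M^(1/(p+1)) (∫ φ²)^(1/(p+1)) (∫ h w^(p+1))^(p/(p+1))`; dividing by
`φ(0)^((p-1)/(p+1))` gives the claim.
-/

open Real Set MeasureTheory

theorem ContinuousOn.memLp_restrict_Ioc {f : ℝ → ℝ} {a b : ℝ} (hf : ContinuousOn f (Icc a b))
    (r : ENNReal) : MemLp f r (volume.restrict (Ioc a b)) := by
  obtain ⟨C, hC⟩ := isCompact_Icc.exists_bound_of_continuousOn hf
  exact .of_bound ((hf.mono Ioc_subset_Icc_self).aestronglyMeasurable measurableSet_Ioc) C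
    (ae_restrict_of_forall_mem measurableSet_Ioc fun x hx => hC x (Ioc_subset_Icc_self hx))

theorem rpow_sub_le_of_sq_le_rpow_mul {D K e : ℝ} (hD : 0 ≤ D) (hK : 0 ≤ K) (he : e < 2)
    (h : D ^ 2 ≤ D ^ e * K) : D ^ (2 - e) ≤ K := by
  rcases hD.eq_or_lt with rfl | hD
  · rwa [zero_rpow (by linarith)]
  · rwa [rpow_sub hD, rpow_two, div_le_iff₀ (rpow_pos_of_pos hD e), mul_comm]

theorem mul_rpow_rpow_le {p h w M : ℝ} (hp : 0 < p) (h0 : 0 ≤ h) (hM : h ≤ M) (hw : 0 ≤ w) :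
    (h * w ^ p) ^ ((p + 1) / p) ≤ M ^ (1 / p) * (h * w ^ (p + 1)) := by
  have hexp : (p + 1) / p = 1 + 1 / p := by field_simp
  rw [mul_rpow h0 (rpow_nonneg hw _), ← rpow_mul hw, mul_div_cancel₀ _ hp.ne', hexp,
    rpow_add' h0 (by positivity), rpow_one]
  calc h * h ^ (1 / p) * w ^ (p + 1) ≤ h * M ^ (1 / p) * w ^ (p + 1) := by gcongr
    _ = M ^ (1 / p) * (h * w ^ (p + 1)) := by ring

namespace intervalIntegral

theorem integral_mul_le_Lp_mul_Lq_of_nonneg {a b p q : ℝ} (hab : a ≤ b)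
    (hpq : p.HolderConjugate q) {f g : ℝ → ℝ} (hf : ContinuousOn f (Icc a b))
    (hg : ContinuousOn g (Icc a b)) (hf0 : ∀ x ∈ Icc a b, 0 ≤ f x)
    (hg0 : ∀ x ∈ Icc a b, 0 ≤ g x) :
    ∫ x in a..b, f x * g x ≤
      (∫ x in a..b, f x ^ p) ^ (1 / p) * (∫ x in a..b, g x ^ q) ^ (1 / q) := by
  simp only [integral_of_le hab]
  exact MeasureTheory.integral_mul_le_Lp_mul_Lq_of_nonneg hpq
    (ae_restrict_of_forall_mem measurableSet_Ioc fun x hx => hf0 x (Ioc_subset_Icc_self hx))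
    (ae_restrict_of_forall_mem measurableSet_Ioc fun x hx => hg0 x (Ioc_subset_Icc_self hx))
    (hf.memLp_restrict_Ioc _) (hg.memLp_restrict_Ioc _)

theorem integral_mono_right_of_nonneg {f : ℝ → ℝ} {a b c : ℝ} (hab : a ≤ b) (hbc : b ≤ c)
    (hf : ContinuousOn f (Icc a c)) (hf0 : ∀ x ∈ Icc a c, 0 ≤ f x) :
    ∫ x in a..b, f x ≤ ∫ x in a..c, f x :=
  integral_mono_interval le_rfl hab hbc
    (ae_restrict_of_forall_mem measurableSet_Ioc fun x hx => hf0 x (Ioc_subset_Icc_self hx))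
    (hf.intervalIntegrable_of_Icc (hab.trans hbc))

theorem integral_mul_le_rpow_mul_Lp_mul_Lq {p a b D : ℝ} (hp : 1 ≤ p) (hab : a ≤ b)
    {φ g : ℝ → ℝ} (hφ : ContinuousOn φ (Icc a b)) (hg : ContinuousOn g (Icc a b))
    (hφ0 : ∀ x ∈ Icc a b, 0 ≤ φ x) (hφD : ∀ x ∈ Icc a b, φ x ≤ D)
    (hg0 : ∀ x ∈ Icc a b, 0 ≤ g x) :
    ∫ x in a..b, φ x * g x ≤ D ^ ((p - 1) / (p + 1)) *
      ((∫ x in a..b, φ x ^ 2) ^ (1 / (p + 1)) *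
        (∫ x in a..b, g x ^ ((p + 1) / p)) ^ (p / (p + 1))) := by
  have hp1 : 0 < p + 1 := by linarith
  have hD : 0 ≤ D := (hφ0 a ⟨le_rfl, hab⟩).trans (hφD a ⟨le_rfl, hab⟩)
  have hpq : (p + 1).HolderConjugate ((p + 1) / p) := by
    rw [holderConjugate_iff, inv_div]
    exact ⟨by linarith, by field_simp; ring⟩
  have hψ : ContinuousOn (fun x => φ x ^ (2 / (p + 1))) (Icc a b) :=
    hφ.rpow_const fun _ _ => Or.inr (by positivity)
  have hsplit : ∀ x ∈ Icc a b,
      φ x * g x ≤ D ^ ((p - 1) / (p + 1)) * (φ x ^ (2 / (p + 1)) * g x) := by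
    intro x hx
    have hsum : (p - 1) / (p + 1) + 2 / (p + 1) = 1 := by field_simp; ring
    calc φ x * g x = φ x ^ ((p - 1) / (p + 1)) * (φ x ^ (2 / (p + 1)) * g x) := by
          rw [← mul_assoc, ← rpow_add' (hφ0 x hx) (by rw [hsum]; norm_num), hsum, rpow_one]
      _ ≤ D ^ ((p - 1) / (p + 1)) * (φ x ^ (2 / (p + 1)) * g x) :=
          mul_le_mul_of_nonneg_right
            (rpow_le_rpow (hφ0 x hx) (hφD x hx) (div_nonneg (by linarith) hp1.le))
            (mul_nonneg (rpow_nonneg (hφ0 x hx) _) (hg0 x hx))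
  have hpow : ∫ x in a..b, (φ x ^ (2 / (p + 1))) ^ (p + 1) = ∫ x in a..b, φ x ^ 2 := by
    refine integral_congr fun x hx => ?_
    rw [uIcc_of_le hab] at hx
    rw [← rpow_mul (hφ0 x hx), div_mul_cancel₀ _ hp1.ne', rpow_two]
  have hholder := integral_mul_le_Lp_mul_Lq_of_nonneg hab hpq hψ hg
    (fun x hx => rpow_nonneg (hφ0 x hx) _) hg0
  rw [hpow, one_div_div] at hholder
  calc ∫ x in a..b, φ x * g x
      ≤ ∫ x in a..b, D ^ ((p - 1) / (p + 1)) * (φ x ^ (2 / (p + 1)) * g x) :=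
        integral_mono_on hab ((hφ.mul hg).intervalIntegrable_of_Icc hab)
          ((continuousOn_const.mul (hψ.mul hg)).intervalIntegrable_of_Icc hab) hsplit
    _ = D ^ ((p - 1) / (p + 1)) * ∫ x in a..b, φ x ^ (2 / (p + 1)) * g x :=
        integral_const_mul _ _
    _ ≤ _ := mul_le_mul_of_nonneg_left hholder (rpow_nonneg hD _)

theorem integral_mul_rpow_rpow_le {p M a b : ℝ} (hp : 0 < p) (hab : a ≤ b)
    {h w : ℝ → ℝ} (hh : ContinuousOn h (Icc a b)) (hw : ContinuousOn w (Icc a b))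
    (hh0 : ∀ x ∈ Icc a b, 0 ≤ h x) (hhM : ∀ x ∈ Icc a b, h x ≤ M)
    (hw0 : ∀ x ∈ Icc a b, 0 ≤ w x) :
    ∫ x in a..b, (h x * w x ^ p) ^ ((p + 1) / p) ≤
      M ^ (1 / p) * ∫ x in a..b, h x * w x ^ (p + 1) := by
  have hwp (r : ℝ) (hr : 0 ≤ r) : ContinuousOn (fun x => w x ^ r) (Icc a b) :=
    hw.rpow_const fun _ _ => Or.inr hr
  have hlhs : ContinuousOn (fun x => (h x * w x ^ p) ^ ((p + 1) / p)) (Icc a b) :=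
    (hh.mul (hwp p hp.le)).rpow_const fun _ _ => Or.inr (by positivity)
  have hrhs : ContinuousOn (fun x => M ^ (1 / p) * (h x * w x ^ (p + 1))) (Icc a b) :=
    continuousOn_const.mul (hh.mul (hwp (p + 1) (by positivity)))
  rw [← integral_const_mul]
  exact integral_mono_on hab (hlhs.intervalIntegrable_of_Icc hab)
    (hrhs.intervalIntegrable_of_Icc hab)
    fun x hx => mul_rpow_rpow_le hp (hh0 x hx) (hhM x hx) (hw0 x hx)

end intervalIntegral

theorem rpow_le_of_hasDerivAt_neg {p a b : ℝ} (hp : 1 ≤ p) (hab : a ≤ b) {φ g : ℝ → ℝ}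
    (hφ : ContinuousOn φ (Icc a b)) (hφ' : ∀ x ∈ Ioo a b, HasDerivAt φ (-g x) x)
    (hg : ContinuousOn g (Icc a b)) (hg0 : ∀ x ∈ Icc a b, 0 ≤ g x) (hφb : φ b = 0) :
    φ a ^ ((p + 3) / (p + 1)) ≤ 2 * (∫ x in a..b, φ x ^ 2) ^ (1 / (p + 1)) *
      (∫ x in a..b, g x ^ ((p + 1) / p)) ^ (p / (p + 1)) := by
  have hanti : AntitoneOn φ (Icc a b) := by
    refine antitoneOn_of_hasDerivWithinAt_nonpos (convex_Icc a b) hφ (f' := fun x => -g x)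
      (fun x hx => ?_) fun x hx => ?_ <;> rw [interior_Icc] at hx
    · exact (hφ' x hx).hasDerivWithinAt
    · exact neg_nonpos.mpr (hg0 x (Ioo_subset_Icc_self hx))
  have hφ0 : ∀ x ∈ Icc a b, 0 ≤ φ x := fun x hx => hφb ▸ hanti hx ⟨hab, le_rfl⟩ hx.2
  have hφa : ∀ x ∈ Icc a b, φ x ≤ φ a := fun x hx => hanti ⟨le_rfl, hab⟩ hx hx.1
  have henergy : φ a ^ 2 = 2 * ∫ x in a..b, φ x * g x := by
    have hFTC : ∫ x in a..b, -(2 * (φ x * g x)) = φ b ^ 2 - φ a ^ 2 :=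
      intervalIntegral.integral_eq_sub_of_hasDerivAt_of_le hab (hφ.pow 2)
        (fun x hx => by simpa [mul_assoc] using (hφ' x hx).pow 2)
        ((continuousOn_const.mul (hφ.mul hg)).neg.intervalIntegrable_of_Icc hab)
    rw [intervalIntegral.integral_neg, intervalIntegral.integral_const_mul, hφb] at hFTC
    linarith
  have hA : 0 ≤ ∫ x in a..b, φ x ^ 2 :=
    intervalIntegral.integral_nonneg hab fun _ _ => sq_nonneg _
  have hG : 0 ≤ ∫ x in a..b, g x ^ ((p + 1) / p) :=
    intervalIntegral.integral_nonneg hab fun x hx => rpow_nonneg (hg0 x hx) _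
  have hexp : (p + 3) / (p + 1) = 2 - (p - 1) / (p + 1) := by field_simp; ring
  rw [hexp]
  refine rpow_sub_le_of_sq_le_rpow_mul (hφ0 a ⟨le_rfl, hab⟩) (by positivity) ?_ ?_
  · rw [div_lt_iff₀ (by linarith)]
    linarith
  · have := intervalIntegral.integral_mul_le_rpow_mul_Lp_mul_Lq hp hab hφ hg hφ0 hφa hg0
    rw [henergy]
    linarith

theorem rpow_le_of_hasDerivAt_neg_mul_rpow {p M a b d : ℝ} (hp : 1 ≤ p) (hab : a ≤ b)
    (hbd : b ≤ d) {φ h w : ℝ → ℝ} (hφ : ContinuousOn φ (Icc a d))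
    (hφ' : ∀ x ∈ Ioo a b, HasDerivAt φ (-(h x * w x ^ p)) x) (hφb : φ b = 0)
    (hh : ContinuousOn h (Icc a d)) (hw : ContinuousOn w (Icc a d))
    (hh0 : ∀ x ∈ Icc a d, 0 ≤ h x) (hhM : ∀ x ∈ Icc a d, h x ≤ M)
    (hw0 : ∀ x ∈ Icc a d, 0 ≤ w x) :
    φ a ^ ((p + 3) / (p + 1)) ≤ 2 * M ^ (1 / (p + 1)) * (∫ x in a..d, φ x ^ 2) ^ (1 / (p + 1)) *
      (∫ x in a..d, h x * w x ^ (p + 1)) ^ (p / (p + 1)) := by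
  have hp0 : 0 < p := by linarith
  have had : a ≤ d := hab.trans hbd
  have hsub : Icc a b ⊆ Icc a d := Icc_subset_Icc_right hbd
  have hM : 0 ≤ M := (hh0 a ⟨le_rfl, had⟩).trans (hhM a ⟨le_rfl, had⟩)
  have hwp (r : ℝ) (hr : 0 ≤ r) : ContinuousOn (fun x => w x ^ r) (Icc a d) :=
    hw.rpow_const fun _ _ => Or.inr hr
  have hhw (r : ℝ) : ∀ x ∈ Icc a d, 0 ≤ h x * w x ^ r := fun x hx =>
    mul_nonneg (hh0 x hx) (rpow_nonneg (hw0 x hx) r)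
  have hAb : 0 ≤ ∫ x in a..b, φ x ^ 2 :=
    intervalIntegral.integral_nonneg hab fun _ _ => sq_nonneg _
  have hA : ∫ x in a..b, φ x ^ 2 ≤ ∫ x in a..d, φ x ^ 2 :=
    intervalIntegral.integral_mono_right_of_nonneg hab hbd (hφ.pow 2) fun _ _ => sq_nonneg _
  have hAd := hAb.trans hA
  have hGb : 0 ≤ ∫ x in a..b, (h x * w x ^ p) ^ ((p + 1) / p) :=
    intervalIntegral.integral_nonneg hab fun x hx => rpow_nonneg (hhw p x (hsub hx)) _
  have hG : ∫ x in a..b, (h x * w x ^ p) ^ ((p + 1) / p) ≤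
      M ^ (1 / p) * ∫ x in a..d, h x * w x ^ (p + 1) :=
    (intervalIntegral.integral_mul_rpow_rpow_le hp0 hab (hh.mono hsub) (hw.mono hsub)
      (fun x hx => hh0 x (hsub hx)) (fun x hx => hhM x (hsub hx)) fun x hx => hw0 x (hsub hx)).trans
      (mul_le_mul_of_nonneg_left (intervalIntegral.integral_mono_right_of_nonneg hab hbd
        (hh.mul (hwp (p + 1) (by positivity))) (hhw (p + 1))) (rpow_nonneg hM _))
  have hBd : 0 ≤ ∫ x in a..d, h x * w x ^ (p + 1) := intervalIntegral.integral_nonneg had (hhw _)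
  have hMB : (M ^ (1 / p) * ∫ x in a..d, h x * w x ^ (p + 1)) ^ (p / (p + 1)) =
      M ^ (1 / (p + 1)) * (∫ x in a..d, h x * w x ^ (p + 1)) ^ (p / (p + 1)) := by
    rw [mul_rpow (rpow_nonneg hM _) hBd, ← rpow_mul hM]
    congr 2
    field_simp
  calc _ ≤ _ := rpow_le_of_hasDerivAt_neg hp hab (hφ.mono hsub) hφ'
        ((hh.mul (hwp p hp0.le)).mono hsub) (fun x hx => hhw p x (hsub hx)) hφb
    _ ≤ 2 * (∫ x in a..d, φ x ^ 2) ^ (1 / (p + 1)) *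
          (M ^ (1 / p) * ∫ x in a..d, h x * w x ^ (p + 1)) ^ (p / (p + 1)) := by gcongr
    _ = _ := by rw [hMB]; ring

theorem stmt_3_general (p : ℝ) (hp : 1 < p) (M : ℝ) (h : ℝ → ℝ)
    (hcont : ContinuousOn h (Set.Ici 0))
    (hbd : ∀ s : ℝ, 0 ≤ s → 0 ≤ h s ∧ h s ≤ M)
    (c : ℝ) (hc : 0 < c) (w : ℝ → ℝ) (hw : ContDiff ℝ 2 w)
    (heq : ∀ s ∈ Set.Ioo (0:ℝ) c, deriv (deriv w) s + h s * (w s) ^ p = 0)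
    (hw0 : w 0 = 0) (hwc : w c = 0)
    (hwpos : ∀ s ∈ Set.Ioo (0:ℝ) c, 0 < w s) :
    (deriv w 0) ^ ((p + 3) / (p + 1)) ≤
      2 * M ^ (1 / (p + 1)) * (∫ s in (0:ℝ)..c, (deriv w s) ^ 2) ^ (1 / (p + 1)) *
        (∫ s in (0:ℝ)..c, h s * (w s) ^ (p + 1)) ^ (p / (p + 1)) := by
  have hw' : ContDiff ℝ 1 (deriv w) := hw.deriv'
  have hwnn : ∀ s ∈ Icc 0 c, 0 ≤ w s := by
    rintro s ⟨hs0, hsc⟩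
    rcases hs0.eq_or_lt with rfl | hs0; · exact hw0.ge
    rcases hsc.eq_or_lt with rfl | hsc; · exact hwc.ge
    exact (hwpos s ⟨hs0, hsc⟩).le
  obtain ⟨m, hm, hw'm⟩ := exists_deriv_eq_zero hc hw.continuous.continuousOn (hw0.trans hwc.symm)
  have hw'' : ∀ s ∈ Ioo 0 m, HasDerivAt (deriv w) (-(h s * w s ^ p)) s := fun s hs =>
    (hw'.differentiable one_ne_zero s).hasDerivAt.congr_deriv
      (by linarith [heq s ⟨hs.1, hs.2.trans hm.2⟩])
  exact rpow_le_of_hasDerivAt_neg_mul_rpow hp.le hm.1.le hm.2.le hw'.continuous.continuousOn hw''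
    hw'm (hcont.mono fun s hs => hs.1) hw.continuous.continuousOn (fun s hs => (hbd s hs.1).1)
    (fun s hs => (hbd s hs.1).2) hwnn

theorem stmt_3 (p : ℝ) (hp : 1 < p) (M : ℝ) (hM : 0 < M) (h : ℝ → ℝ)
    (hcont : ContinuousOn h (Set.Ici 0))
    (hbd : ∀ s : ℝ, 0 ≤ s → 0 ≤ h s ∧ h s ≤ M)
    (c : ℝ) (hc : 0 < c) (w : ℝ → ℝ) (hw : ContDiff ℝ 2 w)
    (heq : ∀ s ∈ Set.Ioo (0:ℝ) c, deriv (deriv w) s + h s * (w s) ^ p = 0)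
    (hw0 : w 0 = 0) (hwc : w c = 0)
    (hwpos : ∀ s ∈ Set.Ioo (0:ℝ) c, 0 < w s) :
    (deriv w 0) ^ ((p + 3) / (p + 1)) ≤
      2 * M ^ (1 / (p + 1)) * (∫ s in (0:ℝ)..c, (deriv w s) ^ 2) ^ (1 / (p + 1)) *
        (∫ s in (0:ℝ)..c, h s * (w s) ^ (p + 1)) ^ (p / (p + 1)) :=
  stmt_3_general p hp M h hcont hbd c hc w hw heq hw0 hwc hwpos
end

section
/- Let p > 1, h continuous with 0 < h(s) ≤ M for s > 0, c > 0, and let w ∈ C²[0,c] be a positive solution of w'' + h(s)w^p = 0 on (0,c) with w(0) = w(c) = 0 and A := w'(0) > 0. Then A ≥ ((p+1)/M)^{1/(p-1)} c^{-(p+1)/(p-1)}. -/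
open Real Filter Set MeasureTheory intervalIntegral

theorem stmt_4 (p : ℝ) (hp : 1 < p) (M : ℝ) (hM : 0 < M) (h : ℝ → ℝ)
    (hcont : ContinuousOn h (Set.Ici 0))
    (hbd : ∀ s : ℝ, 0 < s → 0 < h s ∧ h s ≤ M)
    (c : ℝ) (hc : 0 < c) (w : ℝ → ℝ) (hw : ContDiff ℝ 2 w)
    (heq : ∀ s ∈ Set.Ioo (0:ℝ) c, deriv (deriv w) s + h s * (w s) ^ p = 0)
    (hw0 : w 0 = 0) (hwc : w c = 0)
    (hwpos : ∀ s ∈ Set.Ioo (0:ℝ) c, 0 < w s)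
    (A : ℝ) (hA : A = deriv w 0) (hApos : 0 < A) :
    A ≥ ((p + 1) / M) ^ (1 / (p - 1)) * c ^ (-(p + 1) / (p - 1)) := by
  have hw2 : ContDiff ℝ ((1 : WithTop ℕ∞) + 1) w := hw
  rw [contDiff_succ_iff_deriv] at hw2
  obtain ⟨hwdiff, -, hw1⟩ := hw2
  rw [contDiff_one_iff_deriv] at hw1
  obtain ⟨hwd, hw''cont⟩ := hw1
  -- w'' ≤ 0 on (0,c)
  have hconc : ∀ x ∈ Set.Ioo (0:ℝ) c, deriv (deriv w) x ≤ 0 := by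
    intro x hx
    have h1 := heq x hx
    have h2 := (hbd x hx.1).1
    have h3 := Real.rpow_pos_of_pos (hwpos x hx) p
    nlinarith
  -- deriv w is antitone on [0, c]
  have hanti : AntitoneOn (deriv w) (Set.Icc 0 c) := by
    apply antitoneOn_of_deriv_nonpos (convex_Icc 0 c) hwd.continuous.continuousOn
      hwd.differentiableOn
    intro x hx
    rw [interior_Icc] at hx
    exact hconc x hx
  -- w s ≤ A * s on [0, c]
  have hub : ∀ s ∈ Set.Icc (0:ℝ) c, w s ≤ A * s := by
    have hg : ∀ x : ℝ, HasDerivAt (fun s => A * s - w s) (A - deriv w x) x := by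
      intro x
      have h1 : HasDerivAt (fun s : ℝ => A * s) A x := by
        simpa using (hasDerivAt_id x).const_mul A
      exact h1.sub (hwdiff x).hasDerivAt
    have hmono : MonotoneOn (fun s => A * s - w s) (Set.Icc 0 c) := by
      apply monotoneOn_of_deriv_nonneg (convex_Icc 0 c)
        (fun x _ => (hg x).continuousAt.continuousWithinAt)
        (fun x _ => (hg x).differentiableAt.differentiableWithinAt)
      intro x hx
      rw [interior_Icc] at hx
      rw [(hg x).deriv, sub_nonneg, hA]
      exact hanti (Set.left_mem_Icc.2 hc.le) ⟨hx.1.le, hx.2.le⟩ hx.1.le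
    intro s hs
    have h2 := hmono (Set.left_mem_Icc.2 hc.le) hs hs.1
    simp only [mul_zero, hw0, sub_zero] at h2
    linarith
  -- Rolle: exists m ∈ (0,c) with deriv w m = 0
  obtain ⟨m, hm, hm0⟩ := exists_deriv_eq_zero hc hwdiff.continuous.continuousOn
    (hw0.trans hwc.symm)
  -- FTC: ∫_0^m w'' = deriv w m - deriv w 0 = -A
  have hint_w'' : IntervalIntegrable (deriv (deriv w)) volume 0 m :=
    hw''cont.intervalIntegrable 0 m
  have hftc : ∫ s in (0:ℝ)..m, deriv (deriv w) s = -A := by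
    rw [intervalIntegral.integral_deriv_eq_sub (fun x _ => hwd x) hint_w'', hm0, hA]
    ring
  -- pointwise bound on Ioo 0 m
  have hpt : ∀ x ∈ Set.Ioo (0:ℝ) m, -deriv (deriv w) x ≤ M * A ^ p * x ^ p := by
    intro x hx
    have hxc : x ∈ Set.Ioo (0:ℝ) c := ⟨hx.1, hx.2.trans hm.2⟩
    have h1 := heq x hxc
    have hwx := hwpos x hxc
    have hub' := hub x ⟨hxc.1.le, hxc.2.le⟩
    have hb := hbd x hx.1
    have hrp : (w x) ^ p ≤ (A * x) ^ p :=
      Real.rpow_le_rpow hwx.le hub' (by linarith)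
    have hmul : (A * x) ^ p = A ^ p * x ^ p :=
      Real.mul_rpow hApos.le hx.1.le
    have hwp : (0:ℝ) ≤ (w x) ^ p := (Real.rpow_pos_of_pos hwx p).le
    have h5 : h x * (w x) ^ p ≤ M * (A ^ p * x ^ p) := by
      rw [← hmul]
      exact mul_le_mul hb.2 hrp hwp hM.le
    nlinarith
  -- integral comparison
  have hint_rhs : IntervalIntegrable (fun x => M * A ^ p * x ^ p) volume 0 m :=
    (intervalIntegral.intervalIntegrable_rpow' (by linarith)).const_mul _
  have hae : (fun x => -deriv (deriv w) x) ≤ᵐ[volume.restrict (Set.Icc (0:ℝ) m)]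
      (fun x => M * A ^ p * x ^ p) := by
    have h1 : ∀ᵐ x ∂volume.restrict (Set.Icc (0:ℝ) m), x ∈ Set.Ioo (0:ℝ) m := by
      rw [ae_iff]
      have he : {x | ¬ x ∈ Set.Ioo (0:ℝ) m} = (Set.Ioo (0:ℝ) m)ᶜ := rfl
      rw [he, Measure.restrict_apply measurableSet_Ioo.compl]
      refine measure_mono_null (fun x hx => ?_)
        (((Set.finite_singleton m).insert (0:ℝ)).measure_zero volume)
      obtain ⟨hx1, hx2⟩ := hx
      by_contra hne
      simp only [Set.mem_insert_iff, Set.mem_singleton_iff, not_or] at hne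
      exact hx1 ⟨lt_of_le_of_ne hx2.1 (Ne.symm hne.1), lt_of_le_of_ne hx2.2 hne.2⟩
    filter_upwards [h1] with x hx using hpt x hx
  have hcomp := intervalIntegral.integral_mono_ae_restrict hm.1.le hint_w''.neg hint_rhs hae
  -- compute both integrals
  have hlhs : (∫ s in (0:ℝ)..m, -deriv (deriv w) s) = A := by
    rw [intervalIntegral.integral_neg, hftc]; ring
  have hrhs : (∫ s in (0:ℝ)..m, M * A ^ p * s ^ p) = M * A ^ p * (m ^ (p + 1) / (p + 1)) := by
    rw [intervalIntegral.integral_const_mul, integral_rpow (Or.inl (by linarith)),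
      Real.zero_rpow (by linarith : p + 1 ≠ 0)]
    ring
  simp only [Pi.neg_apply] at hcomp
  rw [hlhs, hrhs] at hcomp
  -- so A ≤ M * A^p * c^(p+1)/(p+1)
  have hcpow : (0:ℝ) < c ^ (p + 1) := Real.rpow_pos_of_pos hc _
  have hmc : m ^ (p + 1) ≤ c ^ (p + 1) :=
    Real.rpow_le_rpow hm.1.le hm.2.le (by linarith)
  have hApow : (0:ℝ) < A ^ p := Real.rpow_pos_of_pos hApos _
  have hstep : A ≤ M * A ^ p * (c ^ (p + 1) / (p + 1)) := by
    calc A ≤ M * A ^ p * (m ^ (p + 1) / (p + 1)) := hcomp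
    _ ≤ M * A ^ p * (c ^ (p + 1) / (p + 1)) := by
        apply mul_le_mul_of_nonneg_left _ (by positivity)
        apply div_le_div_of_nonneg_right hmc (by linarith) |>.trans_eq rfl
  -- rewrite A^p = A^(p-1) * A
  have hAp : A ^ p = A ^ (p - 1) * A := by
    rw [← Real.rpow_add_one hApos.ne' (p - 1)]
    norm_num
  have hkey : (p + 1) / (M * c ^ (p + 1)) ≤ A ^ (p - 1) := by
    rw [div_le_iff₀ (by positivity)]
    have h2 : A * (p + 1) ≤ M * A ^ p * c ^ (p + 1) := by
      calc A * (p + 1) ≤ M * A ^ p * (c ^ (p + 1) / (p + 1)) * (p + 1) :=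
            mul_le_mul_of_nonneg_right hstep (by linarith)
        _ = M * A ^ p * c ^ (p + 1) := by field_simp
    rw [hAp] at h2
    refine le_of_mul_le_mul_left ?_ hApos
    nlinarith [h2]
  -- take (1/(p-1)) power
  have hp1 : (0:ℝ) < p - 1 := by linarith
  have hppos : (0:ℝ) < 1 / (p - 1) := by positivity
  have hBpos : (0:ℝ) < (p + 1) / (M * c ^ (p + 1)) := by positivity
  have hfin := Real.rpow_le_rpow hBpos.le hkey hppos.le
  have hAe : (A ^ (p - 1)) ^ (1 / (p - 1)) = A := by
    rw [← Real.rpow_mul hApos.le]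
    rw [show (p - 1) * (1 / (p - 1)) = 1 by
      rw [mul_one_div, div_self (show p - 1 ≠ 0 by linarith)]]
    exact Real.rpow_one A
  have hBe : ((p + 1) / (M * c ^ (p + 1))) ^ (1 / (p - 1))
      = ((p + 1) / M) ^ (1 / (p - 1)) * c ^ (-(p + 1) / (p - 1)) := by
    have he1 : (p + 1) / (M * c ^ (p + 1)) = ((p + 1) / M) * c ^ (-(p + 1)) := by
      rw [Real.rpow_neg hc.le]
      field_simp
    rw [he1, Real.mul_rpow (by positivity) (Real.rpow_pos_of_pos hc _).le,
      ← Real.rpow_mul hc.le]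
    congr 1
    ring_nf
  rw [hAe, hBe] at hfin
  exact hfin
end

section
/- Let N ≥ 3 be an integer, λ > 0, p > 1, b > 0. Let u₀ ∈ C²[0,b] solve u₀'' + ((N-1)/r)u₀' + λu₀ + u₀^p = 0 on (0,b) with u₀'(0) = 0, u₀(b) = 0, and u₀ > 0 on [0,b). Let φ ∈ C²[0,∞) solve φ'' + ((N-1)/r)φ' + λφ = 0 with φ(0) = 1, φ'(0) = 0. Then φ(r) > 0 for all r ∈ [0,b]. -/
/-!
Sturm comparison through the weighted Wronskian `W = r^{N-1} (φ' u₀ - φ u₀')`, which satisfies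
`W' = r^{N-1} φ u₀^p`. If `φ` had a first zero `r₀ ∈ (0, b]`, then `W` would increase strictly on
`[0, r₀]` from `W 0 = 0`, so `W r₀ > 0`; but `W r₀ = r₀^{N-1} φ'(r₀) u₀(r₀) ≤ 0`, since `φ`
reaches `0` from above and `u₀(r₀) ≥ 0`.
-/

open Real Filter Set
open Topology

/-- `r ^ n` is the integrating factor of the radial operator `f'' + (n / r) f'`. -/
noncomputable def radialWronskian (n : ℕ) (f g : ℝ → ℝ) (r : ℝ) : ℝ :=
  r ^ n * (deriv f r * g r - f r * deriv g r)

theorem hasDerivAt_radialWronskian {n : ℕ} {f g : ℝ → ℝ} {lam h r : ℝ} (hr : r ≠ 0)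
    (hf : DifferentiableAt ℝ f r) (hf' : DifferentiableAt ℝ (deriv f) r)
    (hg : DifferentiableAt ℝ g r) (hg' : DifferentiableAt ℝ (deriv g) r)
    (hf_eq : deriv (deriv f) r + ((n : ℝ) / r) * deriv f r + lam * f r = 0)
    (hg_eq : deriv (deriv g) r + ((n : ℝ) / r) * deriv g r + lam * g r + h = 0) :
    HasDerivAt (radialWronskian n f g) (r ^ n * (f r * h)) r := by
  have hW := (hasDerivAt_pow n r).mul <|
    (hf'.hasDerivAt.mul hg.hasDerivAt).sub (hf.hasDerivAt.mul hg'.hasDerivAt)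
  refine hW.congr_deriv ?_
  simp only [Pi.mul_apply, Pi.sub_apply]
  rw [show deriv (deriv f) r = -((n / r) * deriv f r + lam * f r) by linarith,
    show deriv (deriv g) r = -((n / r) * deriv g r + lam * g r + h) by linarith]
  rcases n with _ | n
  · simp only [pow_zero, one_mul, CharP.cast_eq_zero, zero_mul, zero_div]
    ring
  · rw [Nat.add_sub_cancel, pow_succ]
    field_simp
    ring

theorem radialWronskian_apply_zero {n : ℕ} (hn : n ≠ 0) (f g : ℝ → ℝ) :
    radialWronskian n f g 0 = 0 := by
  simp [radialWronskian, zero_pow hn]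

theorem radialWronskian_pos {n : ℕ} (hn : n ≠ 0) {f g h : ℝ → ℝ} {lam c : ℝ} (hc : 0 < c)
    (hf : ContDiff ℝ 2 f) (hg : ContDiff ℝ 2 g)
    (hf_eq : ∀ r ∈ Ioo 0 c, deriv (deriv f) r + ((n : ℝ) / r) * deriv f r + lam * f r = 0)
    (hg_eq : ∀ r ∈ Ioo 0 c,
      deriv (deriv g) r + ((n : ℝ) / r) * deriv g r + lam * g r + h r = 0)
    (hf_pos : ∀ r ∈ Ioo 0 c, 0 < f r) (hh_pos : ∀ r ∈ Ioo 0 c, 0 < h r) :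
    0 < radialWronskian n f g c := by
  have hW : ∀ r ∈ Ioo 0 c, HasDerivAt (radialWronskian n f g) (r ^ n * (f r * h r)) r :=
    fun r hr => hasDerivAt_radialWronskian hr.1.ne' (hf.differentiable two_ne_zero r)
      (hf.differentiable_deriv_two r) (hg.differentiable two_ne_zero r)
      (hg.differentiable_deriv_two r) (hf_eq r hr) (hg_eq r hr)
  have hW_cont : Continuous (radialWronskian n f g) :=
    (continuous_pow n).mul <|
      ((hf.continuous_deriv one_le_two).mul hg.continuous).sub
        (hf.continuous.mul (hg.continuous_deriv one_le_two))
  have hmono : StrictMonoOn (radialWronskian n f g) (Icc 0 c) := by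
    refine strictMonoOn_of_deriv_pos (convex_Icc 0 c) hW_cont.continuousOn fun r hr => ?_
    rw [interior_Icc] at hr
    have hr_pos := hr.1
    have hfr := hf_pos r hr
    have hhr := hh_pos r hr
    rw [(hW r hr).deriv]
    positivity
  simpa [radialWronskian_apply_zero hn] using
    hmono (left_mem_Icc.mpr hc.le) (right_mem_Icc.mpr hc.le) hc

theorem exists_first_zero {f : ℝ → ℝ} {a b : ℝ} (hf : ContinuousOn f (Icc a b)) (ha : 0 < f a)
    (h : ∃ x ∈ Icc a b, f x ≤ 0) : ∃ c ∈ Ioc a b, f c = 0 ∧ ∀ x ∈ Ico a c, 0 < f x := by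
  set S := Icc a b ∩ f ⁻¹' Iic 0
  have hS_closed : IsClosed S := hf.preimage_isClosed_of_isClosed isClosed_Icc isClosed_Iic
  have hS_bdd : BddBelow S := ⟨a, fun x hx => hx.1.1⟩
  have hc : sInf S ∈ S := hS_closed.csInf_mem h hS_bdd
  have hpos : ∀ x ∈ Ico a (sInf S), 0 < f x := fun x hx =>
    lt_of_not_ge fun hle => hx.2.not_ge <| csInf_le hS_bdd ⟨⟨hx.1, hx.2.le.trans hc.1.2⟩, hle⟩
  have hac : a < sInf S := hc.1.1.lt_of_ne fun hac => (hac ▸ ha).not_ge hc.2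
  obtain ⟨y, hy, hfy⟩ : ∃ y ∈ Icc a (sInf S), f y = 0 :=
    intermediate_value_Icc' hac.le (hf.mono (Icc_subset_Icc_right hc.1.2)) ⟨hc.2, ha.le⟩
  have hy_eq : y = sInf S := hy.2.eq_of_not_lt fun hlt => (hpos y ⟨hy.1, hlt⟩).ne' hfy
  exact ⟨sInf S, ⟨hac, hc.1.2⟩, hy_eq ▸ hfy, hpos⟩

theorem deriv_nonpos_of_pos_of_eq_zero {f : ℝ → ℝ} {a c : ℝ} (hac : a < c)
    (hf : DifferentiableAt ℝ f c) (hfc : f c = 0) (hpos : ∀ x ∈ Ioo a c, 0 < f x) :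
    deriv f c ≤ 0 := by
  have hslope : Tendsto (slope f c) (𝓝[<] c) (𝓝 (deriv f c)) :=
    (hasDerivAt_iff_tendsto_slope.mp hf.hasDerivAt).mono_left (nhdsLT_le_nhdsNE c)
  refine le_of_tendsto hslope ?_
  filter_upwards [Ioo_mem_nhdsLT hac] with x hx
  rw [slope_def_field, hfc]
  exact div_nonpos_of_nonneg_of_nonpos (by linarith [hpos x hx]) (by linarith [hx.2])

theorem stmt_5_general (N : ℕ) (hN : 3 ≤ N) (lam : ℝ) (p : ℝ)
    (b : ℝ) (u₀ : ℝ → ℝ) (hu₀ : ContDiff ℝ 2 u₀)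
    (hequ : ∀ r ∈ Set.Ioo (0:ℝ) b,
      deriv (deriv u₀) r + (((N:ℝ) - 1) / r) * deriv u₀ r + lam * u₀ r + (u₀ r) ^ p = 0)
    (hu₀b : u₀ b = 0)
    (hu₀pos : ∀ r ∈ Set.Ico (0:ℝ) b, 0 < u₀ r)
    (φ : ℝ → ℝ) (hφ : ContDiff ℝ 2 φ)
    (heqφ : ∀ r ∈ Set.Ioi (0:ℝ),
      deriv (deriv φ) r + (((N:ℝ) - 1) / r) * deriv φ r + lam * φ r = 0)
    (hφ0 : φ 0 = 1) :
    ∀ r ∈ Set.Icc (0:ℝ) b, 0 < φ r := by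
  obtain ⟨n, rfl⟩ : ∃ n, N = n + 1 := ⟨N - 1, by omega⟩
  simp only [Nat.cast_add, Nat.cast_one, add_sub_cancel_right] at hequ heqφ
  by_contra! hzero
  obtain ⟨r₀, hr₀, hφr₀, hφpos⟩ :=
    exists_first_zero hφ.continuous.continuousOn (hφ0 ▸ one_pos) hzero
  have hW_pos : 0 < radialWronskian n φ u₀ r₀ :=
    radialWronskian_pos (by omega) hr₀.1 hφ hu₀ (fun r hr => heqφ r hr.1)
      (fun r hr => hequ r ⟨hr.1, hr.2.trans_le hr₀.2⟩) (fun r hr => hφpos r ⟨hr.1.le, hr.2⟩)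
      (fun r hr => rpow_pos_of_pos (hu₀pos r ⟨hr.1.le, hr.2.trans_le hr₀.2⟩) p)
  have hφ'r₀ : deriv φ r₀ ≤ 0 :=
    deriv_nonpos_of_pos_of_eq_zero hr₀.1 (hφ.differentiable two_ne_zero r₀) hφr₀
      fun r hr => hφpos r ⟨hr.1.le, hr.2⟩
  have hu₀r₀ : 0 ≤ u₀ r₀ := by
    rcases hr₀.2.lt_or_eq with h | h
    · exact (hu₀pos r₀ ⟨hr₀.1.le, h⟩).le
    · exact (h ▸ hu₀b).ge
  have hW_nonpos : radialWronskian n φ u₀ r₀ ≤ 0 := by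
    rw [radialWronskian, hφr₀, zero_mul, sub_zero]
    exact mul_nonpos_of_nonneg_of_nonpos (pow_nonneg hr₀.1.le n)
      (mul_nonpos_of_nonpos_of_nonneg hφ'r₀ hu₀r₀)
  exact hW_pos.not_ge hW_nonpos

theorem stmt_5 (N : ℕ) (hN : 3 ≤ N) (lam : ℝ) (hlam : 0 < lam) (p : ℝ) (hp : 1 < p)
    (b : ℝ) (hb : 0 < b) (u₀ : ℝ → ℝ) (hu₀ : ContDiff ℝ 2 u₀)
    (hequ : ∀ r ∈ Set.Ioo (0:ℝ) b,
      deriv (deriv u₀) r + (((N:ℝ) - 1) / r) * deriv u₀ r + lam * u₀ r + (u₀ r) ^ p = 0)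
    (hu₀' : deriv u₀ 0 = 0) (hu₀b : u₀ b = 0)
    (hu₀pos : ∀ r ∈ Set.Ico (0:ℝ) b, 0 < u₀ r)
    (φ : ℝ → ℝ) (hφ : ContDiff ℝ 2 φ)
    (heqφ : ∀ r ∈ Set.Ioi (0:ℝ),
      deriv (deriv φ) r + (((N:ℝ) - 1) / r) * deriv φ r + lam * φ r = 0)
    (hφ0 : φ 0 = 1) (hφ'0 : deriv φ 0 = 0) :
    ∀ r ∈ Set.Icc (0:ℝ) b, 0 < φ r :=
  stmt_5_general N hN lam p b u₀ hu₀ hequ hu₀b hu₀pos φ hφ heqφ hφ0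
end
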